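/- Let z₁, z₂ > 0, s > 0, and define F_{z₁,z₂}(r) = arcosh(1 + (r² + (z₁ − z₂)²)/(2·z₁·z₂)). Let α = √(2/π)·(1 − e^{−1/2}) + ∫_1^∞ √(2/π)·e^{−z²/2} dz. Then ∫_0^∞ √(2/π)·e^{−z²/2} · F_{z₁,z₂}(s·z) dz ≥ α·F_{z₁,z₂}(s). -/

import Mathlib

open Real MeasureTheory

/-- The inverse hyperbolic cosine. -/
noncomputable def arcosh (x : ℝ) : ℝ := Real.log (x + Real.sqrt (x ^ 2 - 1))

/-- The hyperbolic distance, in the Poincaré half-space model, between two points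
with heights `z₁, z₂` whose horizontal coordinates are at Euclidean distance `r`. -/
noncomputable def F (z₁ z₂ r : ℝ) : ℝ :=
  _root_.arcosh (1 + (r ^ 2 + (z₁ - z₂) ^ 2) / (2 * z₁ * z₂))

/-!
Write `F(s) = arcosh x`. Convexity of `sinh` on `[0, ∞)` gives `sinh (t u) ≤ t sinh u` for
`t ∈ [0, 1]`, hence `cosh (t y) - 1 = 2 sinh² (t y / 2) ≤ t² (cosh y - 1)`, which is
`t · F(s) ≤ F(s t)`; for `t ≥ 1` the distance `F` simply grows with `|r|`. So
`F(s t) ≥ min t 1 · F(s)`, and integrating against the half-normal density, whose integral of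
`min t 1` is exactly `α` (the part on `[0, 1]` is `∫₀¹ t e^{-t²/2} dt = 1 - e^{-1/2}`), gives the
bound. The integrals exist because `arcosh x ≤ x` makes `F(s t)` at most quadratic in `t`.
-/

open Set

namespace Real

theorem convexOn_sinh : ConvexOn ℝ (Ici 0) sinh :=
  MonotoneOn.convexOn_of_deriv (convex_Ici 0) continuous_sinh.continuousOn
    differentiable_sinh.differentiableOn <| by
      rw [deriv_sinh, interior_Ici]
      intro x hx y _ hxy
      exact cosh_le_cosh.2 (by rwa [abs_of_pos hx, abs_of_pos (lt_of_lt_of_le hx hxy)])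

theorem sinh_mul_le_mul_sinh {l u : ℝ} (hu : 0 ≤ u) (hl₀ : 0 ≤ l) (hl₁ : l ≤ 1) :
    sinh (l * u) ≤ l * sinh u := by
  simpa using convexOn_sinh.2 (mem_Ici.2 hu) (mem_Ici.2 le_rfl) hl₀ (sub_nonneg.2 hl₁)
    (add_sub_cancel l 1)

theorem cosh_sub_one_eq_two_mul_sinh_sq (t : ℝ) : cosh t - 1 = 2 * sinh (t / 2) ^ 2 := by
  have := cosh_two_mul (t / 2)
  rw [mul_div_cancel₀ t two_ne_zero, cosh_sq] at this
  linarith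

theorem cosh_mul_sub_one_le {l t : ℝ} (ht : 0 ≤ t) (hl₀ : 0 ≤ l) (hl₁ : l ≤ 1) :
    cosh (l * t) - 1 ≤ l ^ 2 * (cosh t - 1) := by
  have h := sinh_mul_le_mul_sinh (u := t / 2) (by positivity) hl₀ hl₁
  have h₀ : 0 ≤ sinh (l * (t / 2)) := sinh_nonneg_iff.2 (by positivity)
  rw [cosh_sub_one_eq_two_mul_sinh_sq, cosh_sub_one_eq_two_mul_sinh_sq, mul_div_assoc]
  nlinarith [pow_le_pow_left₀ h₀ h 2]

theorem mul_arcosh_le_arcosh {l x : ℝ} (hx : 1 ≤ x) (hl₀ : 0 ≤ l) (hl₁ : l ≤ 1) :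
    l * arcosh x ≤ arcosh (1 + l ^ 2 * (x - 1)) := by
  have h := cosh_mul_sub_one_le (arcosh_nonneg hx) hl₀ hl₁
  rw [cosh_arcosh hx] at h
  have hpos : 0 < 1 + l ^ 2 * (x - 1) := by
    have := mul_nonneg (sq_nonneg l) (sub_nonneg.2 hx)
    linarith
  calc l * arcosh x = arcosh (cosh (l * arcosh x)) :=
        (arcosh_cosh (mul_nonneg hl₀ (arcosh_nonneg hx))).symm
    _ ≤ arcosh (1 + l ^ 2 * (x - 1)) := (arcosh_le_arcosh (cosh_pos _) hpos).2 (by linarith)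

theorem arcosh_le_self {x : ℝ} (hx : 1 ≤ x) : arcosh x ≤ x := by
  have hx₀ : 0 < x := by linarith
  calc arcosh x ≤ arcosh (cosh x) :=
        (arcosh_le_arcosh hx₀ (cosh_pos x)).2
          ((self_le_sinh_iff.2 hx₀.le).trans (sinh_lt_cosh _).le)
    _ = x := arcosh_cosh hx₀.le

end Real

section F

-- `_root_.arcosh` unfolds to `Real.arcosh`, so Mathlib's `arcosh` lemmas apply to `F` as they stand.

variable {z₁ z₂ : ℝ}

theorem one_le_one_add_F_arg (hz₁ : 0 < z₁) (hz₂ : 0 < z₂) (r : ℝ) :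
    1 ≤ 1 + (r ^ 2 + (z₁ - z₂) ^ 2) / (2 * z₁ * z₂) :=
  le_add_of_nonneg_right (by positivity)

theorem F_nonneg (hz₁ : 0 < z₁) (hz₂ : 0 < z₂) (r : ℝ) : 0 ≤ F z₁ z₂ r :=
  arcosh_nonneg (one_le_one_add_F_arg hz₁ hz₂ r)

theorem F_le (hz₁ : 0 < z₁) (hz₂ : 0 < z₂) (r : ℝ) :
    F z₁ z₂ r ≤ 1 + (r ^ 2 + (z₁ - z₂) ^ 2) / (2 * z₁ * z₂) :=
  arcosh_le_self (one_le_one_add_F_arg hz₁ hz₂ r)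

theorem continuous_F (hz₁ : 0 < z₁) (hz₂ : 0 < z₂) : Continuous (F z₁ z₂) :=
  continuousOn_arcosh.comp_continuous (by fun_prop) (one_le_one_add_F_arg hz₁ hz₂)

theorem min_one_mul_F_le (hz₁ : 0 < z₁) (hz₂ : 0 < z₂) (s : ℝ) {t : ℝ} (ht : 0 ≤ t) :
    min t 1 * F z₁ z₂ s ≤ F z₁ z₂ (s * t) := by
  have hx := one_le_one_add_F_arg hz₁ hz₂ s
  rcases le_total t 1 with ht₁ | ht₁
  · rw [min_eq_left ht₁]
    refine (mul_arcosh_le_arcosh hx ht ht₁).trans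
      ((arcosh_le_arcosh (by positivity) (by positivity)).2 ?_)
    rw [add_sub_cancel_left, add_le_add_iff_left, mul_div_assoc', mul_pow]
    gcongr
    nlinarith [sq_nonneg (z₁ - z₂), pow_le_one₀ ht ht₁ (n := 2)]
  · rw [min_eq_right ht₁, one_mul]
    refine (arcosh_le_arcosh (by positivity) (by positivity)).2 ?_
    gcongr 1 + (?_ + _) / _
    rw [mul_pow]
    exact le_mul_of_one_le_right (sq_nonneg s) (one_le_pow₀ ht₁)

end F

theorem integrable_exp_neg_sq_div_two : Integrable fun z : ℝ => exp (-z ^ 2 / 2) := by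
  simpa [neg_div, div_eq_inv_mul] using integrable_exp_neg_mul_sq (b := 2⁻¹) (by norm_num)

theorem integrable_sq_mul_exp_neg_sq_div_two :
    Integrable fun z : ℝ => z ^ 2 * exp (-z ^ 2 / 2) := by
  simpa [neg_div, div_eq_inv_mul] using
    integrable_rpow_mul_exp_neg_mul_sq (b := 2⁻¹) (by norm_num) (s := 2) (by norm_num)

theorem integrable_exp_neg_sq_div_two_mul_F {z₁ z₂ : ℝ} (hz₁ : 0 < z₁) (hz₂ : 0 < z₂) (s : ℝ) :
    Integrable fun z => exp (-z ^ 2 / 2) * F z₁ z₂ (s * z) := by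
  set d := 2 * z₁ * z₂
  have := continuous_F hz₁ hz₂
  refine ((integrable_exp_neg_sq_div_two.const_mul (1 + (z₁ - z₂) ^ 2 / d)).add
    (integrable_sq_mul_exp_neg_sq_div_two.const_mul (s ^ 2 / d))).mono'
    (by fun_prop) (Filter.Eventually.of_forall fun z => ?_)
  rw [norm_of_nonneg (mul_nonneg (exp_pos _).le (F_nonneg hz₁ hz₂ _))]
  calc exp (-z ^ 2 / 2) * F z₁ z₂ (s * z)
      ≤ exp (-z ^ 2 / 2) * (1 + ((s * z) ^ 2 + (z₁ - z₂) ^ 2) / d) :=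
        mul_le_mul_of_nonneg_left (F_le hz₁ hz₂ _) (exp_pos _).le
    _ = _ := by simp only [Pi.add_apply]; ring

theorem integral_mul_exp_neg_sq_div_two (a b : ℝ) :
    ∫ z in a..b, z * exp (-z ^ 2 / 2) = exp (-a ^ 2 / 2) - exp (-b ^ 2 / 2) := by
  have hderiv (z : ℝ) : HasDerivAt (fun t => -exp (-t ^ 2 / 2)) (z * exp (-z ^ 2 / 2)) z := by
    have h : HasDerivAt (fun t : ℝ => -t ^ 2 / 2) (-z) z :=
      ((hasDerivAt_pow 2 z).neg.div_const 2).congr_deriv (by ring)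
    exact h.exp.neg.congr_deriv (by ring)
  rw [intervalIntegral.integral_eq_sub_of_hasDerivAt (fun z _ => hderiv z)
    ((by fun_prop : Continuous fun z : ℝ => z * exp (-z ^ 2 / 2)).intervalIntegrable _ _)]
  ring

theorem integrableOn_exp_neg_sq_div_two_mul_min_one :
    IntegrableOn (fun z : ℝ => exp (-z ^ 2 / 2) * min z 1) (Ioi 0) :=
  integrable_exp_neg_sq_div_two.integrableOn.mul_bdd (by fun_prop) <|
    (ae_restrict_iff' measurableSet_Ioi).2 <| Filter.Eventually.of_forall fun z hz => by
      rw [norm_of_nonneg (le_min (le_of_lt hz) zero_le_one)]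
      exact min_le_right z 1

theorem integral_exp_neg_sq_div_two_mul_min_one :
    ∫ z in Ioi 0, exp (-z ^ 2 / 2) * min z 1 =
      1 - exp (-1 / 2) + ∫ z in Ioi 1, exp (-z ^ 2 / 2) := by
  have h := integrableOn_exp_neg_sq_div_two_mul_min_one
  rw [← Ioc_union_Ioi_eq_Ioi zero_le_one, setIntegral_union (Ioc_disjoint_Ioi le_rfl)
    measurableSet_Ioi (h.mono_set Ioc_subset_Ioi_self) (h.mono_set (Ioi_subset_Ioi zero_le_one))]
  congr 1
  · rw [setIntegral_congr_fun measurableSet_Ioc fun z hz => by rw [min_eq_left hz.2, mul_comm],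
      ← intervalIntegral.integral_of_le zero_le_one, integral_mul_exp_neg_sq_div_two]
    norm_num
  · exact setIntegral_congr_fun measurableSet_Ioi fun z hz => by rw [min_eq_right hz.le, mul_one]

theorem expected_projected_distance_lower_bound_general
    (z₁ z₂ s : ℝ) (hz₁ : 0 < z₁) (hz₂ : 0 < z₂) :
    (Real.sqrt (2 / π) * (1 - Real.exp (-1 / 2)) +
        ∫ z in Set.Ioi (1 : ℝ), Real.sqrt (2 / π) * Real.exp (-z ^ 2 / 2)) *
      F z₁ z₂ s ≤
    ∫ z in Set.Ioi (0 : ℝ),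
      Real.sqrt (2 / π) * Real.exp (-z ^ 2 / 2) * F z₁ z₂ (s * z) := by
  set K := √(2 / π)
  have hα : K * (1 - exp (-1 / 2)) + ∫ z in Ioi 1, K * exp (-z ^ 2 / 2) =
      K * ∫ z in Ioi 0, exp (-z ^ 2 / 2) * min z 1 := by
    rw [integral_exp_neg_sq_div_two_mul_min_one, integral_const_mul, mul_add]
  calc (K * (1 - exp (-1 / 2)) + ∫ z in Ioi 1, K * exp (-z ^ 2 / 2)) * F z₁ z₂ s
      = ∫ z in Ioi 0, K * (exp (-z ^ 2 / 2) * min z 1) * F z₁ z₂ s := by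
        rw [hα, integral_mul_const, integral_const_mul]
    _ ≤ ∫ z in Ioi 0, K * exp (-z ^ 2 / 2) * F z₁ z₂ (s * z) := by
        refine setIntegral_mono_on
          ((integrableOn_exp_neg_sq_div_two_mul_min_one.const_mul K).mul_const _)
          (by simpa only [mul_assoc] using
            ((integrable_exp_neg_sq_div_two_mul_F hz₁ hz₂ s).const_mul K).integrableOn)
          measurableSet_Ioi fun z hz => ?_
        rw [mul_assoc, mul_assoc, mul_assoc]
        gcongr
        exact min_one_mul_F_le hz₁ hz₂ s (le_of_lt hz)

/-- Lemma 4.3: the expected projected hyperbolic distance is at least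
`α · F_{z₁,z₂}(s)` where `α = √(2/π)(1 - e^{-1/2}) + ∫_1^∞ √(2/π) e^{-z²/2} dz`. -/
theorem expected_projected_distance_lower_bound
    (z₁ z₂ s : ℝ) (hz₁ : 0 < z₁) (hz₂ : 0 < z₂) (hs : 0 < s) :
    (Real.sqrt (2 / π) * (1 - Real.exp (-1 / 2)) +
        ∫ z in Set.Ioi (1 : ℝ), Real.sqrt (2 / π) * Real.exp (-z ^ 2 / 2)) *
      F z₁ z₂ s ≤
    ∫ z in Set.Ioi (0 : ℝ),
      Real.sqrt (2 / π) * Real.exp (-z ^ 2 / 2) * F z₁ z₂ (s * z) :=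
  expected_projected_distance_lower_bound_general z₁ z₂ s hz₁ hz₂
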